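/- Properties of the extrapolated potential, part (ii): assume the kernel matrix K = (exp(−c_{ij}/2))_{i,j} is positive definite. For every f ∈ ℝ^d: (f^E)^E = f^E, Ω_C^*(f^E) = Ω_C^*(f), and g-softmax(f^E) = g-softmax(f). -/

import Mathlib

open Finset Real Filter

noncomputable section

/-- The probability simplex in `ℝ^d`. -/
def simplexS (d : ℕ) : Set (Fin d → ℝ) := stdSimplex ℝ (Fin d)


open scoped Classical

/-- `Φ_C(α,f) = Σ_{i,j} α_i α_j exp(-(f_i + f_j + c_{ij})/2)`. -/
def Phi {d : ℕ} (C : Matrix (Fin d) (Fin d) ℝ) (α f : Fin d → ℝ) : ℝ :=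
  ∑ i, ∑ j, α i * α j * Real.exp (-(f i + f j + C i j) / 2)

/-- The geometric log-sum-exp `Ω_C^*(f) = -log min_{α ∈ △^d} Φ_C(α, f)`. -/
def OmegaStar {d : ℕ} (C : Matrix (Fin d) (Fin d) ℝ) (f : Fin d → ℝ) : ℝ :=
  -Real.log (sInf ((fun α => Phi C α f) '' simplexS d))

/-- The geometric softmax: the (unique, when the kernel is positive definite) minimizer of
`Φ_C(·, f)` over the simplex. -/
def gsoftmax {d : ℕ} (C : Matrix (Fin d) (Fin d) ℝ) (f : Fin d → ℝ) : Fin d → ℝ :=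
  if h : ∃ α ∈ simplexS d, IsMinOn (fun β => Phi C β f) (simplexS d) α
  then h.choose else fun _ => 0

/-- The soft C-transform `T(f,α)_i = -2 log Σ_j α_j exp((f_j - c_{ij})/2)`. -/
def Tsoft {d : ℕ} (C : Matrix (Fin d) (Fin d) ℝ) (f α : Fin d → ℝ) : Fin d → ℝ :=
  fun i => -2 * Real.log (∑ j, α j * Real.exp ((f j - C i j) / 2))

/-- `f` is the symmetric Sinkhorn potential of `α`: `-f = T(-f, α)`. -/
def IsSinkhornPotential {d : ℕ} (C : Matrix (Fin d) (Fin d) ℝ) (α f : Fin d → ℝ) : Prop :=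
  -f = Tsoft C (-f) α

/-- The symmetric Sinkhorn potential `∇Ω(α)`: the (unique, when the kernel is positive
definite) `f` with `-f = T(-f, α)`. -/
def gradOmega {d : ℕ} (C : Matrix (Fin d) (Fin d) ℝ) (α : Fin d → ℝ) : Fin d → ℝ :=
  if h : ∃ f : Fin d → ℝ, IsSinkhornPotential C α f then h.choose else fun _ => 0

/-- The extrapolation `f^E = -T(-(f - Ω_C^*(f)·1), g-softmax(f)) + Ω_C^*(f)·1`. -/
def extrap {d : ℕ} (C : Matrix (Fin d) (Fin d) ℝ) (f : Fin d → ℝ) : Fin d → ℝ :=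
  fun i => -(Tsoft C (fun j => -(f j - OmegaStar C f)) (gsoftmax C f) i) + OmegaStar C f

/-- The kernel matrix `K = (exp(-c_{ij}/2))_{ij}`. -/
def kernelK {d : ℕ} (C : Matrix (Fin d) (Fin d) ℝ) : Matrix (Fin d) (Fin d) ℝ :=
  Matrix.of fun i j => Real.exp (-(C i j) / 2)

/-!
With `α = g-softmax(f)`, `v = α ⊙ e^{-f/2}` and `m = Φ_C(α, f) = ⟪v, K v⟫`, the KKT conditions
for minimizing the quadratic form `Φ_C(·, f)` on the simplex give `e^{-f^E/2} = m / (K v)` and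
`α ⊙ e^{-f^E/2} = v`. Hence every `γ` in the simplex gives a vector `u = γ ⊙ e^{-f^E/2}` with
`⟪u, K v⟫ = m`, so that `Φ_C(γ, f^E) = ⟪u, K u⟫ = m + ⟪u - v, K (u - v)⟫ ≥ m`, with equality
only at `γ = α`. So `α` is also the unique minimizer of `Φ_C(·, f^E)`, with the same value `m`;
and `f^E` depends on `f` only through `Ω_C^*(f)` and `v`, which are unchanged.
-/

open Matrix

lemma nonneg_of_forall_mul_add_sq_mul_nonneg {a b : ℝ}
    (h : ∀ t : ℝ, 0 < t → t ≤ 1 → 0 ≤ t * a + t ^ 2 * b) : 0 ≤ a := by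
  by_contra! ha
  set t := min 1 (-a / (|b| + 1))
  have ht : 0 < t := lt_min one_pos (div_pos (neg_pos.2 ha) (by positivity))
  have htb : t * (|b| + 1) ≤ -a :=
    (le_div_iff₀ (by positivity)).1 (min_le_right _ _)
  have := h t ht (min_le_left _ _)
  nlinarith [le_abs_self b]

section QuadraticMinimization

variable {n : Type*} [Fintype n]

lemma dotProduct_mulVec_add_smul_sub_self {A : Matrix n n ℝ} (hA : A.IsSymm) (x y : n → ℝ)
    (t : ℝ) :
    (x + t • (y - x)) ⬝ᵥ A *ᵥ (x + t • (y - x)) - x ⬝ᵥ A *ᵥ x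
      = t * (2 * ((y - x) ⬝ᵥ A *ᵥ x)) + t ^ 2 * ((y - x) ⬝ᵥ A *ᵥ (y - x)) := by
  have hsymm : x ⬝ᵥ A *ᵥ (y - x) = (y - x) ⬝ᵥ A *ᵥ x := by
    rw [← dotProduct_transpose_mulVec, hA.eq]
  simp only [mulVec_add, mulVec_smul, add_dotProduct, dotProduct_add, smul_dotProduct,
    dotProduct_smul, hsymm, smul_eq_mul]
  ring

lemma Matrix.PosDef.dotProduct_mulVec_lt_of_dotProduct_mulVec_eq {K : Matrix n n ℝ}
    (hK : K.PosDef) {u v : n → ℝ} (hcross : u ⬝ᵥ K *ᵥ v = v ⬝ᵥ K *ᵥ v) (huv : u ≠ v) :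
    v ⬝ᵥ K *ᵥ v < u ⬝ᵥ K *ᵥ u := by
  have hpos := hK.dotProduct_mulVec_pos (sub_ne_zero.2 huv)
  have hsymm : v ⬝ᵥ K *ᵥ u = u ⬝ᵥ K *ᵥ v := by
    rw [← dotProduct_transpose_mulVec, ← conjTranspose_eq_transpose_of_trivial, hK.isHermitian.eq]
  simp only [star_trivial, mulVec_sub, sub_dotProduct, dotProduct_sub, hsymm, hcross] at hpos
  linarith

variable [DecidableEq n]

lemma diagonal_mulVec_eq_mul (e α : n → ℝ) : diagonal e *ᵥ α = α * e :=
  funext fun i => (mulVec_diagonal e α i).trans (mul_comm _ _)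

lemma dotProduct_mulVec_le_of_isMinOn {A : Matrix n n ℝ} (hA : A.IsSymm) {α : n → ℝ}
    (hmin : IsMinOn (fun x => x ⬝ᵥ A *ᵥ x) (stdSimplex ℝ n) α) (hα : α ∈ stdSimplex ℝ n)
    (i : n) : α ⬝ᵥ A *ᵥ α ≤ (A *ᵥ α) i := by
  have hdir : (Pi.single i 1 - α) ⬝ᵥ A *ᵥ α = (A *ᵥ α) i - α ⬝ᵥ A *ᵥ α := by
    simp [sub_dotProduct, single_dotProduct]
  suffices 0 ≤ 2 * ((Pi.single i 1 - α) ⬝ᵥ A *ᵥ α) by linarith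
  refine nonneg_of_forall_mul_add_sq_mul_nonneg
    (b := (Pi.single i 1 - α) ⬝ᵥ A *ᵥ (Pi.single i 1 - α)) fun t ht0 ht1 => ?_
  rw [← dotProduct_mulVec_add_smul_sub_self hA, sub_nonneg]
  refine hmin ?_
  have hseg := (convex_stdSimplex ℝ n) hα (single_mem_stdSimplex ℝ i) (sub_nonneg.2 ht1) ht0.le
    (by ring)
  convert hseg using 1
  simp only [smul_sub, sub_smul, one_smul]
  abel

lemma mul_mulVec_eq_of_isMinOn {A : Matrix n n ℝ} (hA : A.IsSymm) {α : n → ℝ}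
    (hmin : IsMinOn (fun x => x ⬝ᵥ A *ᵥ x) (stdSimplex ℝ n) α) (hα : α ∈ stdSimplex ℝ n)
    (i : n) : α i * (A *ᵥ α) i = α i * (α ⬝ᵥ A *ᵥ α) := by
  have hterm_nonneg : ∀ j ∈ Finset.univ, 0 ≤ α j * ((A *ᵥ α) j - α ⬝ᵥ A *ᵥ α) := fun j _ =>
    mul_nonneg (hα.1 j) (sub_nonneg.2 (dotProduct_mulVec_le_of_isMinOn hA hmin hα j))
  have hsum : ∑ j, α j * ((A *ᵥ α) j - α ⬝ᵥ A *ᵥ α) = 0 := by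
    simp only [mul_sub, Finset.sum_sub_distrib, ← Finset.sum_mul, hα.2, one_mul]
    exact sub_self _
  have := (Finset.sum_eq_zero_iff_of_nonneg hterm_nonneg).1 hsum i (Finset.mem_univ i)
  linarith [mul_sub (α i) ((A *ᵥ α) i) (α ⬝ᵥ A *ᵥ α)]

end QuadraticMinimization

def expNegHalf {n : Type*} (f : n → ℝ) : n → ℝ := fun i => exp (-f i / 2)

lemma expNegHalf_pos {n : Type*} (f : n → ℝ) (i : n) : 0 < expNegHalf f i := exp_pos _

def scaledKernel {d : ℕ} (C : Matrix (Fin d) (Fin d) ℝ) (f : Fin d → ℝ) :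
    Matrix (Fin d) (Fin d) ℝ :=
  diagonal (expNegHalf f) * kernelK C * diagonal (expNegHalf f)

section Potentials

variable {d : ℕ} {C : Matrix (Fin d) (Fin d) ℝ}

lemma Phi_eq_dotProduct_kernelK_mulVec (α f : Fin d → ℝ) :
    Phi C α f = (α * expNegHalf f) ⬝ᵥ kernelK C *ᵥ (α * expNegHalf f) := by
  simp only [Phi, dotProduct, mulVec, kernelK, of_apply, Pi.mul_apply, expNegHalf,
    Finset.mul_sum]
  refine Finset.sum_congr rfl fun i _ => Finset.sum_congr rfl fun j _ => ?_
  rw [show -(f i + f j + C i j) / 2 = -f i / 2 + (-C i j / 2 + -f j / 2) by ring,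
    exp_add, exp_add]
  ring

lemma Phi_eq_dotProduct_scaledKernel_mulVec (α f : Fin d → ℝ) :
    Phi C α f = α ⬝ᵥ scaledKernel C f *ᵥ α := by
  rw [Phi_eq_dotProduct_kernelK_mulVec, scaledKernel, ← mulVec_mulVec, ← mulVec_mulVec,
    dotProduct_mulVec α (diagonal _), diagonal_mulVec_eq_mul]
  congr 1
  exact funext fun i => (vecMul_diagonal α _ i).symm

lemma scaledKernel_mulVec_apply (α f : Fin d → ℝ) (i : Fin d) :
    (scaledKernel C f *ᵥ α) i = expNegHalf f i * (kernelK C *ᵥ (α * expNegHalf f)) i := by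
  rw [scaledKernel, ← mulVec_mulVec, ← mulVec_mulVec, mulVec_diagonal, diagonal_mulVec_eq_mul]

lemma scaledKernel_isSymm (hC : C.IsSymm) (f : Fin d → ℝ) : (scaledKernel C f).IsSymm := by
  have hK : (kernelK C).IsSymm := by
    ext i j
    simp only [kernelK, transpose_apply, of_apply, hC.apply i j]
  simp only [IsSymm, scaledKernel, transpose_mul, diagonal_transpose, hK.eq, Matrix.mul_assoc]

lemma exists_isMinOn_Phi (hd : 1 ≤ d) (C : Matrix (Fin d) (Fin d) ℝ) (g : Fin d → ℝ) :
    ∃ α ∈ simplexS d, IsMinOn (fun β => Phi C β g) (simplexS d) α := by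
  have hcont : Continuous fun β : Fin d → ℝ => Phi C β g := by
    simp only [Phi]
    fun_prop
  exact (isCompact_stdSimplex ℝ (Fin d)).exists_isMinOn
    ⟨_, single_mem_stdSimplex ℝ ⟨0, hd⟩⟩ hcont.continuousOn

lemma gsoftmax_mem_isMinOn (hd : 1 ≤ d) (C : Matrix (Fin d) (Fin d) ℝ) (g : Fin d → ℝ) :
    gsoftmax C g ∈ simplexS d ∧
      IsMinOn (fun β => Phi C β g) (simplexS d) (gsoftmax C g) := by
  rw [gsoftmax, dif_pos (exists_isMinOn_Phi hd C g)]
  exact (exists_isMinOn_Phi hd C g).choose_spec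

lemma gsoftmax_eq_of_forall_Phi_lt (hd : 1 ≤ d) {g α : Fin d → ℝ} (hα : α ∈ simplexS d)
    (hlt : ∀ γ ∈ simplexS d, γ ≠ α → Phi C α g < Phi C γ g) : gsoftmax C g = α := by
  obtain ⟨hmem, hmin⟩ := gsoftmax_mem_isMinOn hd C g
  by_contra hne
  exact (hlt _ hmem hne).not_ge (hmin hα)

lemma OmegaStar_eq_of_isMinOn {g α : Fin d → ℝ} (hα : α ∈ simplexS d)
    (hmin : IsMinOn (fun β => Phi C β g) (simplexS d) α) :
    OmegaStar C g = -log (Phi C α g) := by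
  have hleast : IsLeast ((fun β => Phi C β g) '' simplexS d) (Phi C α g) :=
    ⟨⟨α, hα, rfl⟩, Set.forall_mem_image.2 fun _ hβ => hmin hβ⟩
  rw [OmegaStar, hleast.csInf_eq]

lemma extrap_apply (f : Fin d → ℝ) (i : Fin d) :
    extrap C f i = 2 * log (exp (OmegaStar C f / 2) *
      (kernelK C *ᵥ (gsoftmax C f * expNegHalf f)) i) + OmegaStar C f := by
  simp only [extrap, Tsoft, mulVec, dotProduct, kernelK, of_apply, Pi.mul_apply, expNegHalf,
    Finset.mul_sum]
  rw [neg_mul, neg_neg]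
  congr 3
  refine Finset.sum_congr rfl fun j _ => ?_
  rw [show (-(f j - OmegaStar C f) - C i j) / 2 = OmegaStar C f / 2 + (-C i j / 2 + -f j / 2)
    by ring, exp_add, exp_add]
  ring

lemma Phi_le_expNegHalf_mul_kernelK_mulVec (hC : C.IsSymm) {f α : Fin d → ℝ}
    (hα : α ∈ simplexS d) (hmin : IsMinOn (fun β => Phi C β f) (simplexS d) α) (i : Fin d) :
    Phi C α f ≤ expNegHalf f i * (kernelK C *ᵥ (α * expNegHalf f)) i := by
  simp only [Phi_eq_dotProduct_scaledKernel_mulVec] at hmin ⊢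
  rw [← scaledKernel_mulVec_apply]
  exact dotProduct_mulVec_le_of_isMinOn (scaledKernel_isSymm hC f) hmin hα i

lemma mul_expNegHalf_mul_kernelK_mulVec (hC : C.IsSymm) {f α : Fin d → ℝ}
    (hα : α ∈ simplexS d) (hmin : IsMinOn (fun β => Phi C β f) (simplexS d) α) (i : Fin d) :
    α i * (expNegHalf f i * (kernelK C *ᵥ (α * expNegHalf f)) i) = α i * Phi C α f := by
  simp only [Phi_eq_dotProduct_scaledKernel_mulVec] at hmin ⊢
  rw [← scaledKernel_mulVec_apply]
  exact mul_mulVec_eq_of_isMinOn (scaledKernel_isSymm hC f) hmin hα i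

lemma Phi_pos (hK : (kernelK C).PosDef) {α : Fin d → ℝ} (hα : α ∈ simplexS d)
    (f : Fin d → ℝ) : 0 < Phi C α f := by
  have hne : α * expNegHalf f ≠ 0 := by
    intro h0
    have hα0 : α = 0 := funext fun i => by
      simpa [(expNegHalf_pos f i).ne'] using congrFun h0 i
    simpa [hα0] using hα.2
  simpa [Phi_eq_dotProduct_kernelK_mulVec] using hK.dotProduct_mulVec_pos hne

lemma kernelK_mulVec_pos (hC : C.IsSymm) (hK : (kernelK C).PosDef) {f α : Fin d → ℝ}
    (hα : α ∈ simplexS d) (hmin : IsMinOn (fun β => Phi C β f) (simplexS d) α) (i : Fin d) :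
    0 < (kernelK C *ᵥ (α * expNegHalf f)) i :=
  pos_of_mul_pos_right ((Phi_pos hK hα f).trans_le
    (Phi_le_expNegHalf_mul_kernelK_mulVec hC hα hmin i)) (expNegHalf_pos f i).le

lemma expNegHalf_extrap (hd : 1 ≤ d) (hC : C.IsSymm) (hK : (kernelK C).PosDef)
    (f : Fin d → ℝ) (i : Fin d) :
    expNegHalf (extrap C f) i =
      Phi C (gsoftmax C f) f / (kernelK C *ᵥ (gsoftmax C f * expNegHalf f)) i := by
  obtain ⟨hα, hmin⟩ := gsoftmax_mem_isMinOn hd C f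
  have hm := Phi_pos hK hα f
  have hS := kernelK_mulVec_pos hC hK hα hmin i
  rw [expNegHalf, extrap_apply, OmegaStar_eq_of_isMinOn hα hmin, log_mul (exp_ne_zero _) hS.ne',
    log_exp]
  set m := Phi C (gsoftmax C f) f
  set S := (kernelK C *ᵥ (gsoftmax C f * expNegHalf f)) i
  rw [show -(2 * (-log m / 2 + log S) + -log m) / 2 = log m - log S by ring, exp_sub,
    exp_log hm, exp_log hS]

lemma gsoftmax_mul_expNegHalf_extrap (hd : 1 ≤ d) (hC : C.IsSymm) (hK : (kernelK C).PosDef)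
    (f : Fin d → ℝ) :
    gsoftmax C f * expNegHalf (extrap C f) = gsoftmax C f * expNegHalf f := by
  obtain ⟨hα, hmin⟩ := gsoftmax_mem_isMinOn hd C f
  funext i
  have hS := kernelK_mulVec_pos hC hK hα hmin i
  rw [Pi.mul_apply, Pi.mul_apply, expNegHalf_extrap hd hC hK, mul_div_assoc', div_eq_iff hS.ne']
  linear_combination -(mul_expNegHalf_mul_kernelK_mulVec hC hα hmin i)

lemma Phi_gsoftmax_extrap (hd : 1 ≤ d) (hC : C.IsSymm) (hK : (kernelK C).PosDef)
    (f : Fin d → ℝ) : Phi C (gsoftmax C f) (extrap C f) = Phi C (gsoftmax C f) f := by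
  rw [Phi_eq_dotProduct_kernelK_mulVec, Phi_eq_dotProduct_kernelK_mulVec,
    gsoftmax_mul_expNegHalf_extrap hd hC hK]

lemma Phi_gsoftmax_extrap_lt (hd : 1 ≤ d) (hC : C.IsSymm) (hK : (kernelK C).PosDef)
    (f : Fin d → ℝ) {γ : Fin d → ℝ} (hγ : γ ∈ simplexS d) (hne : γ ≠ gsoftmax C f) :
    Phi C (gsoftmax C f) (extrap C f) < Phi C γ (extrap C f) := by
  rw [Phi_eq_dotProduct_kernelK_mulVec, Phi_eq_dotProduct_kernelK_mulVec]
  refine hK.dotProduct_mulVec_lt_of_dotProduct_mulVec_eq ?_ fun h => hne (funext fun i =>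
    mul_right_cancel₀ (expNegHalf_pos (extrap C f) i).ne' (congrFun h i))
  obtain ⟨hα, hmin⟩ := gsoftmax_mem_isMinOn hd C f
  rw [gsoftmax_mul_expNegHalf_extrap hd hC hK, ← Phi_eq_dotProduct_kernelK_mulVec]
  calc (γ * expNegHalf (extrap C f)) ⬝ᵥ kernelK C *ᵥ (gsoftmax C f * expNegHalf f)
      = ∑ i, γ i * Phi C (gsoftmax C f) f := by
        refine Finset.sum_congr rfl fun i _ => ?_
        rw [Pi.mul_apply, expNegHalf_extrap hd hC hK, mul_assoc,
          div_mul_cancel₀ _ (kernelK_mulVec_pos hC hK hα hmin i).ne']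
    _ = Phi C (gsoftmax C f) f := by rw [← Finset.sum_mul, hγ.2, one_mul]

end Potentials

theorem extrap_idempotent_invariants_general (d : ℕ) (hd : 1 ≤ d)
    (C : Matrix (Fin d) (Fin d) ℝ) (hCsym : C.IsSymm)
    (hK : (kernelK C).PosDef) (f : Fin d → ℝ) :
    extrap C (extrap C f) = extrap C f ∧
    OmegaStar C (extrap C f) = OmegaStar C f ∧
    gsoftmax C (extrap C f) = gsoftmax C f := by
  obtain ⟨hα, hmin⟩ := gsoftmax_mem_isMinOn hd C f
  have hlt : ∀ γ ∈ simplexS d, γ ≠ gsoftmax C f →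
      Phi C (gsoftmax C f) (extrap C f) < Phi C γ (extrap C f) :=
    fun _ => Phi_gsoftmax_extrap_lt hd hCsym hK f
  have hgs : gsoftmax C (extrap C f) = gsoftmax C f := gsoftmax_eq_of_forall_Phi_lt hd hα hlt
  have hminE : IsMinOn (fun β => Phi C β (extrap C f)) (simplexS d) (gsoftmax C f) :=
    isMinOn_iff.2 fun γ hγ => by
      rcases eq_or_ne γ (gsoftmax C f) with rfl | hne
      exacts [le_rfl, (hlt γ hγ hne).le]
  have hΩ : OmegaStar C (extrap C f) = OmegaStar C f := by
    rw [OmegaStar_eq_of_isMinOn hα hmin, OmegaStar_eq_of_isMinOn hα hminE,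
      Phi_gsoftmax_extrap hd hCsym hK]
  refine ⟨funext fun i => ?_, hΩ, hgs⟩
  rw [extrap_apply, extrap_apply, hΩ, hgs, gsoftmax_mul_expNegHalf_extrap hd hCsym hK]

/-- Properties of the extrapolated potential, part (ii): `(f^E)^E = f^E`,
`Ω_C^*(f^E) = Ω_C^*(f)` and `g-softmax(f^E) = g-softmax(f)`. -/
theorem extrap_idempotent_invariants (d : ℕ) (hd : 1 ≤ d)
    (C : Matrix (Fin d) (Fin d) ℝ) (hCsym : C.IsSymm) (hCdiag : ∀ i, C i i = 0)
    (hK : (kernelK C).PosDef) (f : Fin d → ℝ) :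
    extrap C (extrap C f) = extrap C f ∧
    OmegaStar C (extrap C f) = OmegaStar C f ∧
    gsoftmax C (extrap C f) = gsoftmax C f :=
  extrap_idempotent_invariants_general d hd C hCsym hK f
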